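/- Let d ≥ 1 and q ∈ (1,∞) with q' = q/(q−1), and let g : ℝ^d × ℝ^d → ℝ^d satisfy conditions (g1)–(g4) with exponent q. Then there exist constants c̃₁, c̃₂ > 0, independent of ε, such that for every ε ∈ (0,1) and every (s,v) ∈ ℝ^d × ℝ^d with gε(s,v) = 0 one has s · v ≥ c̃₁(|s|^{min{2,q'}} + |v|^{min{2,q}}) − c̃₂. -/

import Mathlib

noncomputable section
open MeasureTheory Filter Topology

/-- `ℝ^d` with the Euclidean inner product. -/
abbrev Vec (d : ℕ) : Type := EuclideanSpace ℝ (Fin d)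

/-- The Euclidean inner product `s · v`. -/
def dotp {d : ℕ} (s v : Vec d) : ℝ := inner ℝ s v

/-- The partial derivative `∂_s g(s,v)` as a continuous linear map. -/
def partials {d : ℕ} (g : Vec d × Vec d → Vec d) (p : Vec d × Vec d) :
    Vec d →L[ℝ] Vec d :=
  (fderiv ℝ g p).comp (ContinuousLinearMap.inl ℝ (Vec d) (Vec d))

/-- The partial derivative `∂_v g(s,v)` as a continuous linear map. -/
def partialv {d : ℕ} (g : Vec d × Vec d → Vec d) (p : Vec d × Vec d) :
    Vec d →L[ℝ] Vec d :=
  (fderiv ℝ g p).comp (ContinuousLinearMap.inr ℝ (Vec d) (Vec d))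

/-- (g1): `g` is Lipschitz continuous with `g(0,0) = 0`. -/
def Condg1 {d : ℕ} (g : Vec d × Vec d → Vec d) : Prop :=
  (∃ K : NNReal, LipschitzWith K g) ∧ g (0, 0) = 0

/-- (g2): a.e. differentiability together with the sign conditions on the partial
derivatives. -/
def Condg2 {d : ℕ} (g : Vec d × Vec d → Vec d) : Prop :=
  ∀ᵐ p ∂(volume : Measure (Vec d × Vec d)),
    DifferentiableAt ℝ g p ∧
    (∀ x : Vec d, 0 ≤ dotp (partials g p x) x) ∧
    (∀ x : Vec d, dotp (partialv g p x) x ≤ 0) ∧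
    (∀ x : Vec d, x ≠ 0 → 0 < dotp (partials g p x - partialv g p x) x) ∧
    (∀ x : Vec d,
      dotp (partialv g p (ContinuousLinearMap.adjoint (partials g p) x)) x ≤ 0)

/-- (g3): either coercivity in `s` or anti-coercivity in `v` at infinity. -/
def Condg3 {d : ℕ} (g : Vec d × Vec d → Vec d) : Prop :=
  (∀ v : Vec d, 0 < liminf (fun s : Vec d => dotp (g (s, v)) s) (comap norm atTop)) ∨
  (∀ s : Vec d, limsup (fun v : Vec d => dotp (g (s, v)) v) (comap norm atTop) < 0)

/-- (g4) with exponent `q`: `(q, q')`-coercivity on the null points of `g`. -/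
def Condg4 {d : ℕ} (q : ℝ) (g : Vec d × Vec d → Vec d) : Prop :=
  ∃ c₁ c₂ : ℝ, 0 < c₁ ∧ 0 < c₂ ∧ ∀ s v : Vec d, g (s, v) = 0 →
    c₁ * (‖s‖ ^ (q / (q - 1)) + ‖v‖ ^ q) - c₂ ≤ dotp s v

/-- The `ε`-approximation `gε(s,v) := g(s − εv, v − εs)`. -/
def geps {d : ℕ} (g : Vec d × Vec d → Vec d) (ε : ℝ) : Vec d × Vec d → Vec d :=
  fun p => g (p.1 - ε • p.2, p.2 - ε • p.1)

/-!
If `gε(s, v) = 0`, then `(a, b) = (s - εv, v - εs)` is a null point of `g`, so (g4) bounds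
`⟪a, b⟫ = (1 + ε²)⟪s, v⟫ - ε(‖s‖² + ‖v‖²)` from below. Going back from `‖a‖, ‖b‖` to `‖s‖, ‖v‖`
costs errors `ε‖v‖`, `ε‖s‖`; raised to a power `p ≤ 2` they are dominated by `ε‖v‖² + 1` and
`ε‖s‖² + 1` uniformly in `ε ∈ (0, 1)`, and these are absorbed by the term `ε(‖s‖² + ‖v‖²)`. This is
why the exponents are capped at `2`.
-/

namespace Real

lemma add_rpow_le_two_rpow_mul_rpow_add_rpow {x y p : ℝ} (hx : 0 ≤ x) (hy : 0 ≤ y)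
    (hp : 0 ≤ p) : (x + y) ^ p ≤ 2 ^ p * (x ^ p + y ^ p) := calc
  (x + y) ^ p ≤ (2 * max x y) ^ p := by
    gcongr
    rw [two_mul]; gcongr <;> simp
  _ = 2 ^ p * max x y ^ p := mul_rpow zero_le_two (le_max_of_le_left hx)
  _ ≤ 2 ^ p * (x ^ p + y ^ p) := by
    gcongr
    rcases le_total x y with h | h
    · rw [max_eq_right h]; linarith [rpow_nonneg hx p]
    · rw [max_eq_left h]; linarith [rpow_nonneg hy p]

lemma rpow_le_rpow_add_one {x p r : ℝ} (hx : 0 ≤ x) (hp : 0 ≤ p) (hpr : p ≤ r) :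
    x ^ p ≤ x ^ r + 1 := by
  rcases le_total x 1 with h | h
  · linarith [rpow_le_one hx h hp, rpow_nonneg hx r]
  · linarith [rpow_le_rpow_of_exponent_le h hpr]

lemma mul_rpow_le_mul_sq_add_one {ε y p : ℝ} (hε₀ : 0 ≤ ε) (hε₁ : ε ≤ 1) (hy : 0 ≤ y)
    (hp₀ : 0 ≤ p) (hp₂ : p ≤ 2) : (ε * y) ^ p ≤ ε * y ^ 2 + 1 := calc
  (ε * y) ^ p = ε ^ p * y ^ p := mul_rpow hε₀ hy
  _ ≤ ε ^ (p / 2) * y ^ p := by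
    gcongr ?_ * _
    exact rpow_le_rpow_of_exponent_ge' hε₀ hε₁ (by positivity) (by linarith)
  _ = (ε * y ^ 2) ^ (p / 2) := by
    rw [mul_rpow hε₀ (by positivity), ← rpow_natCast y 2, ← rpow_mul hy]
    norm_num [mul_div_cancel₀]
  _ ≤ ε * y ^ 2 + 1 := by
    simpa using rpow_le_rpow_add_one (x := ε * y ^ 2) (by positivity) (by positivity)
      (by linarith : p / 2 ≤ 1)

end Real

/-- The factor `1 + ε²` is at most `2` when `t ≥ 0` and only decreases `t` when `t < 0`. -/
lemma half_sub_le_of_sub_le_one_add_sq_mul {ε A B t : ℝ} (hε : ε ^ 2 ≤ 1) (hA : 0 ≤ A)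
    (hB : 0 ≤ B) (h : A - B ≤ (1 + ε ^ 2) * t) : A / 2 - B ≤ t := by
  rcases le_total 0 t with ht | ht
  · nlinarith
  · nlinarith [sq_nonneg ε]

section InnerProductSpace

variable {E : Type*} [NormedAddCommGroup E] [InnerProductSpace ℝ E]

lemma inner_sub_smul_sub_smul (ε : ℝ) (s v : E) :
    inner ℝ (s - ε • v) (v - ε • s) = (1 + ε ^ 2) * inner ℝ s v - ε * (‖s‖ ^ 2 + ‖v‖ ^ 2) := by
  simp only [inner_sub_left, inner_sub_right, real_inner_smul_left, real_inner_smul_right,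
    real_inner_self_eq_norm_sq, real_inner_comm v s]
  ring

lemma norm_rpow_le_norm_sub_smul_rpow {ε p r : ℝ} (hε₀ : 0 ≤ ε) (hε₁ : ε ≤ 1) (hp₀ : 0 ≤ p)
    (hp₂ : p ≤ 2) (hpr : p ≤ r) (s v : E) :
    ‖s‖ ^ p ≤ 4 * ‖s - ε • v‖ ^ r + 4 * (ε * ‖v‖ ^ 2) + 8 := by
  have hs : ‖s‖ ≤ ‖s - ε • v‖ + ε * ‖v‖ := by
    simpa [norm_smul_of_nonneg hε₀] using norm_le_norm_sub_add s (ε • v)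
  have h2p : (2 : ℝ) ^ p ≤ 4 := by
    simpa [show (2 : ℝ) ^ (2 : ℝ) = 4 by norm_num] using
      Real.rpow_le_rpow_of_exponent_le one_le_two hp₂
  calc ‖s‖ ^ p ≤ (‖s - ε • v‖ + ε * ‖v‖) ^ p := by gcongr
    _ ≤ 2 ^ p * (‖s - ε • v‖ ^ p + (ε * ‖v‖) ^ p) :=
      Real.add_rpow_le_two_rpow_mul_rpow_add_rpow (by positivity) (by positivity) hp₀
    _ ≤ 4 * ((‖s - ε • v‖ ^ r + 1) + (ε * ‖v‖ ^ 2 + 1)) := by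
      gcongr
      · exact Real.rpow_le_rpow_add_one (norm_nonneg _) hp₀ hpr
      · exact Real.mul_rpow_le_mul_sq_add_one hε₀ hε₁ (norm_nonneg v) hp₀ hp₂
    _ = 4 * ‖s - ε • v‖ ^ r + 4 * (ε * ‖v‖ ^ 2) + 8 := by ring

lemma le_inner_of_le_inner_sub_smul {ε c₁ c₂ k p₁ p₂ r₁ r₂ : ℝ} (hε₀ : 0 ≤ ε) (hε₁ : ε ≤ 1)
    (hc₂ : 0 ≤ c₂) (hk₀ : 0 ≤ k) (hkc : k ≤ c₁) (hk₁ : k ≤ 1)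
    (hp₁ : 0 ≤ p₁) (hp₁₂ : p₁ ≤ 2) (hpr₁ : p₁ ≤ r₁)
    (hp₂ : 0 ≤ p₂) (hp₂₂ : p₂ ≤ 2) (hpr₂ : p₂ ≤ r₂) {s v : E}
    (h : c₁ * (‖s - ε • v‖ ^ r₁ + ‖v - ε • s‖ ^ r₂) - c₂ ≤ inner ℝ (s - ε • v) (v - ε • s)) :
    k / 8 * (‖s‖ ^ p₁ + ‖v‖ ^ p₂) - (4 * k + c₂) ≤ inner ℝ s v := by
  have hs := norm_rpow_le_norm_sub_smul_rpow hε₀ hε₁ hp₁ hp₁₂ hpr₁ s v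
  have hv := norm_rpow_le_norm_sub_smul_rpow hε₀ hε₁ hp₂ hp₂₂ hpr₂ v s
  have hsv := mul_le_mul_of_nonneg_left (add_le_add hs hv) hk₀
  have hε : ε ^ 2 ≤ 1 := pow_le_one₀ hε₀ hε₁
  rw [show k / 8 * (‖s‖ ^ p₁ + ‖v‖ ^ p₂) = k / 4 * (‖s‖ ^ p₁ + ‖v‖ ^ p₂) / 2 by ring]
  refine half_sub_le_of_sub_le_one_add_sq_mul hε (by positivity) (by positivity) ?_
  calc k / 4 * (‖s‖ ^ p₁ + ‖v‖ ^ p₂) - (4 * k + c₂)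
      ≤ k * (‖s - ε • v‖ ^ r₁ + ‖v - ε • s‖ ^ r₂) + k * (ε * (‖s‖ ^ 2 + ‖v‖ ^ 2)) - c₂ := by
        linarith
    _ ≤ c₁ * (‖s - ε • v‖ ^ r₁ + ‖v - ε • s‖ ^ r₂) + ε * (‖s‖ ^ 2 + ‖v‖ ^ 2) - c₂ := by
        have hX : 0 ≤ ‖s - ε • v‖ ^ r₁ + ‖v - ε • s‖ ^ r₂ := by positivity
        have hY : 0 ≤ ε * (‖s‖ ^ 2 + ‖v‖ ^ 2) := by positivity
        linarith [mul_le_mul_of_nonneg_right hkc hX, mul_le_of_le_one_left hY hk₁]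
    _ ≤ (1 + ε ^ 2) * inner ℝ s v := by
        linarith [inner_sub_smul_sub_smul ε s v]

end InnerProductSpace

theorem geps_uniform_coercivity_general {d : ℕ} (q : ℝ) (hq : 1 < q)
    (g : Vec d × Vec d → Vec d)
    (hg4 : Condg4 q g) :
    ∃ c₁ c₂ : ℝ, 0 < c₁ ∧ 0 < c₂ ∧
      ∀ ε ∈ Set.Ioo (0 : ℝ) 1, ∀ s v : Vec d, geps g ε (s, v) = 0 →
        c₁ * (‖s‖ ^ min 2 (q / (q - 1)) + ‖v‖ ^ min 2 q) - c₂ ≤ dotp s v := by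
  obtain ⟨c₁, c₂, hc₁, hc₂, hg⟩ := hg4
  have hq' : 0 < q / (q - 1) := div_pos (by linarith) (by linarith)
  refine ⟨min c₁ 1 / 8, 4 * min c₁ 1 + c₂, by positivity, by positivity, ?_⟩
  rintro ε ⟨hε₀, hε₁⟩ s v hsv
  exact le_inner_of_le_inner_sub_smul hε₀.le hε₁.le hc₂.le (by positivity) (min_le_left _ _)
    (min_le_right _ _) (by positivity) (min_le_left _ _) (min_le_right _ _) (by positivity)
    (min_le_left _ _) (min_le_right _ _) (hg _ _ hsv)

/-- uniform (`ε`-independent) coercivity of the null points of the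
`ε`-approximations `gε`. -/
theorem geps_uniform_coercivity {d : ℕ} (hd : 1 ≤ d) (q : ℝ) (hq : 1 < q)
    (g : Vec d × Vec d → Vec d)
    (hg1 : Condg1 g) (hg2 : Condg2 g) (hg3 : Condg3 g) (hg4 : Condg4 q g) :
    ∃ c₁ c₂ : ℝ, 0 < c₁ ∧ 0 < c₂ ∧
      ∀ ε ∈ Set.Ioo (0 : ℝ) 1, ∀ s v : Vec d, geps g ε (s, v) = 0 →
        c₁ * (‖s‖ ^ min 2 (q / (q - 1)) + ‖v‖ ^ min 2 q) - c₂ ≤ dotp s v :=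
  geps_uniform_coercivity_general q hq g hg4
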